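/- Skew-spectrum of the modified Cartesian product with bipartite factor: if the skew-eigenvalues of S(H^τ) are ±μ_1 i,…,±μ_t i together with m−2t zeros and those of S(G^σ) are ±λ_1 i,…,±λ_r i together with n−2r zeros, where H is bipartite, then the skew-eigenvalues of the oriented graph (H^τ □ G^σ)^o are ±i√(μ_j² + λ_k²) each with multiplicity 2 (1≤j≤t, 1≤k≤r), ±μ_j i with multiplicity n−2r, ±λ_k i with multiplicity m−2t, and 0 with multiplicity (m−2t)(n−2r). -/

import Mathlib

open Matrix Polynomial
open scoped Kronecker

/-!
The square of `M = S_H ⊗ 1 + D ⊗ S_G` is the Kronecker sum `S_H² ⊗ 1 + 1 ⊗ S_G²`: the cross terms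
`(S_H D + D S_H) ⊗ S_G` vanish because `D` anticommutes with `S_H`, and `D² = 1`. Real
skew-symmetric matrices are unitarily diagonalizable over `ℂ`, so the eigenvalues of `M²` are the
squares of those of `M`, and those of the Kronecker sum are the pairwise sums of the eigenvalues
`0, -μ_j²` of `S_H²` and `0, -λ_k²` of `S_G²`. Finally `M` has the characteristic polynomial of
`Mᵀ = -M`, so its spectrum is symmetric under negation, and a negation-symmetric multiset is
determined by its image under `z ↦ z²`.
-/

namespace Multiset

section SquareMap

variable {R : Type*} [CommRing R] [NoZeroDivisors R]

theorem count_sq_map_sq [DecidableEq R] {a : R} (ha : a ≠ -a) (s : Multiset R) :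
    count (a ^ 2) (s.map (· ^ 2)) = count a s + count (-a) s := by
  induction s using Multiset.induction_on with
  | empty => simp
  | cons b s ih =>
    have hab : ¬(a = b ∧ -a = b) := fun ⟨h, h'⟩ => ha (h.trans h'.symm)
    simp only [map_cons, count_cons, ih, sq_eq_sq_iff_eq_or_eq_neg, ← neg_eq_iff_eq_neg]
    split_ifs <;> first | omega | tauto

theorem count_zero_map_sq [DecidableEq R] (s : Multiset R) :
    count 0 (s.map (· ^ 2)) = count 0 s := by
  rw [count_map, count_eq_card_filter_eq]
  congr 1
  exact filter_congr fun x _ => by simp [eq_comm (a := (0 : R))]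

theorem eq_of_map_sq_eq_of_map_neg_eq [IsAddTorsionFree R] {s t : Multiset R}
    (hs : s.map Neg.neg = s) (ht : t.map Neg.neg = t) (h : s.map (· ^ 2) = t.map (· ^ 2)) :
    s = t := by
  classical
  have count_neg {u : Multiset R} (hu : u.map Neg.neg = u) (a : R) :
      count (-a) u = count a u := by
    conv_lhs => rw [← hu]
    exact count_map_eq_count' _ _ neg_injective a
  ext a
  by_cases ha : a = 0
  · subst ha
    simpa only [count_zero_map_sq] using congrArg (count 0) h
  · have hsq := congrArg (count (a ^ 2)) h
    have ha' : a ≠ -a := by rwa [Ne, self_eq_neg]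
    rw [count_sq_map_sq ha', count_sq_map_sq ha', count_neg hs, count_neg ht] at hsq
    omega

end SquareMap

theorem replicate_bind {α β : Type*} (n : ℕ) (a : α) (f : α → Multiset β) :
    (replicate n a).bind f = n • f a := by
  induction n with
  | zero => simp
  | succ n ih => rw [replicate_succ, cons_bind, ih, succ_nsmul']

theorem nsmul_bind {α β : Type*} (n : ℕ) (s : Multiset α) (f : α → Multiset β) :
    n • s.bind f = s.bind fun a => n • f a := by
  induction n with
  | zero => simp
  | succ n ih => simp only [succ_nsmul, ih, bind_add]

theorem univ_val_bind_prod {ι κ β : Type*} [Fintype ι] [Fintype κ]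
    (f : ι × κ → Multiset β) :
    (Finset.univ : Finset (ι × κ)).val.bind f =
      Finset.univ.val.bind fun j => Finset.univ.val.bind fun k => f (j, k) :=
  Fintype.sum_prod_type f

end Multiset

section SkewSpectrum

open Multiset

variable {K ι κ : Type*} [CommRing K] [Fintype ι] [Fintype κ]

def skewSpectrum (c : ℕ) (x : ι → K) : Multiset K :=
  replicate c 0 + Finset.univ.val.bind fun j => {x j, -x j}

def productSkewSpectrum (a b : ℕ) (s : ι × κ → K) (x : ι → K) (y : κ → K) : Multiset K :=
  replicate (a * b) 0 +
    Finset.univ.val.bind (fun p => replicate 2 (s p) + replicate 2 (-s p)) +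
    Finset.univ.val.bind (fun j => replicate b (x j) + replicate b (-x j)) +
    Finset.univ.val.bind (fun k => replicate a (y k) + replicate a (-y k))

theorem skewSpectrum_map_sq (c : ℕ) (x : ι → K) :
    (skewSpectrum c x).map (· ^ 2) =
      replicate c 0 + Finset.univ.val.bind fun j => replicate 2 (x j ^ 2) := by
  simp only [skewSpectrum, map_add, map_replicate, map_bind, insert_eq_cons, map_cons,
    map_singleton, neg_sq, zero_pow two_ne_zero]
  rfl

theorem productSkewSpectrum_map_neg (a b : ℕ) (s : ι × κ → K) (x : ι → K) (y : κ → K) :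
    (productSkewSpectrum a b s x y).map Neg.neg = productSkewSpectrum a b s x y := by
  simp only [productSkewSpectrum, map_add, map_replicate, map_bind, neg_zero, neg_neg, add_comm]

theorem productSkewSpectrum_map_sq (a b : ℕ) {s : ι × κ → K} {x : ι → K} {y : κ → K}
    (hs : ∀ p, s p ^ 2 = x p.1 ^ 2 + y p.2 ^ 2) :
    (productSkewSpectrum a b s x y).map (· ^ 2) =
      ((skewSpectrum a x).map (· ^ 2)).bind fun z =>
        ((skewSpectrum b y).map (· ^ 2)).map (z + ·) := by
  rw [skewSpectrum_map_sq, skewSpectrum_map_sq]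
  simp only [productSkewSpectrum, add_bind, bind_assoc, map_add, map_replicate, map_bind,
    replicate_bind, add_zero, zero_add, nsmul_replicate, nsmul_bind, bind_add, univ_val_bind_prod,
    hs, neg_sq, ← two_nsmul, zero_pow two_ne_zero]
  rw [mul_comm a 2]
  abel

end SkewSpectrum

namespace Matrix

theorem IsDiag.mul_self_eq_one {R ι : Type*} [Fintype ι] [DecidableEq ι] [Ring R]
    {D : Matrix ι ι R} (hD : D.IsDiag) (hpm : ∀ i, D i i = 1 ∨ D i i = -1) : D * D = 1 := by
  rw [← hD.diagonal_diag, diagonal_mul_diagonal, ← diagonal_one]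
  congr 1
  ext i
  rcases hpm i with h | h <;> simp [h]

theorem conjTranspose_map_ofReal {m n : Type*} (M : Matrix m n ℝ) :
    (M.map Complex.ofReal)ᴴ = Mᵀ.map Complex.ofReal := by
  rw [← conjTranspose_map _ fun x => (Complex.conj_ofReal x).symm,
    conjTranspose_eq_transpose_of_trivial]

theorem map_ofReal_mul {l m n : Type*} [Fintype m] (A : Matrix l m ℝ) (B : Matrix m n ℝ) :
    (A * B).map Complex.ofReal = A.map Complex.ofReal * B.map Complex.ofReal :=
  Matrix.map_mul (f := Complex.ofRealHom)

theorem map_ofReal_kronecker {l m n p : Type*} (A : Matrix l m ℝ) (B : Matrix n p ℝ) :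
    (A ⊗ₖ B).map Complex.ofReal = A.map Complex.ofReal ⊗ₖ B.map Complex.ofReal := by
  ext
  simp [kroneckerMap_apply]

section ModifiedProduct

variable {R ι κ : Type*} [CommRing R] [DecidableEq κ]
  {A D : Matrix ι ι R} {B : Matrix κ κ R}

theorem transpose_kronecker_one_add_kronecker (hA : Aᵀ = -A) (hB : Bᵀ = -B) (hD : Dᵀ = D) :
    (A ⊗ₖ 1 + D ⊗ₖ B)ᵀ = -(A ⊗ₖ 1 + D ⊗ₖ B) := by
  ext ⟨i, k⟩ ⟨j, l⟩
  have hAij := congrFun (congrFun hA j) i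
  have hBkl := congrFun (congrFun hB l) k
  have hDij := congrFun (congrFun hD j) i
  simp only [transpose_apply, neg_apply] at hAij hBkl hDij
  simp only [transpose_apply, add_apply, neg_apply, kroneckerMap_apply, one_apply,
    eq_comm (a := l), hAij, hBkl, hDij]
  ring

theorem kronecker_one_add_kronecker_mul_self [Fintype ι] [DecidableEq ι] [Fintype κ]
    (hD : D * D = 1) (hDA : D * A = -(A * D)) :
    (A ⊗ₖ 1 + D ⊗ₖ B) * (A ⊗ₖ 1 + D ⊗ₖ B) = (A * A) ⊗ₖ 1 + 1 ⊗ₖ (B * B) := by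
  have hcross : (A * D) ⊗ₖ B + (D * A) ⊗ₖ B = 0 := by
    rw [← add_kronecker, hDA, add_neg_cancel, zero_kronecker]
  simp only [add_mul, mul_add, ← mul_kronecker_mul, Matrix.mul_one, Matrix.one_mul, hD]
  calc _ = (A * A) ⊗ₖ 1 + 1 ⊗ₖ (B * B) + ((A * D) ⊗ₖ B + (D * A) ⊗ₖ B) := by abel
    _ = _ := by rw [hcross, add_zero]

end ModifiedProduct

section UnitaryDiagonalization

variable {ι κ : Type*} [Fintype ι] [Fintype κ]

theorem kronecker_unitary_conj {U X : Matrix ι ι ℂ} {V Y : Matrix κ κ ℂ} :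
    U ⊗ₖ V * (X ⊗ₖ Y) * star (U ⊗ₖ V) = (U * X * star U) ⊗ₖ (V * Y * star V) := by
  rw [star_eq_conjTranspose, conjTranspose_kronecker, ← mul_kronecker_mul, ← mul_kronecker_mul,
    ← star_eq_conjTranspose, ← star_eq_conjTranspose]

variable [DecidableEq ι] [DecidableEq κ]

def IsUnitarilyDiagonalizable (A : Matrix ι ι ℂ) : Prop :=
  ∃ U ∈ unitaryGroup ι ℂ, ∃ d : ι → ℂ, A = U * diagonal d * star U

theorem roots_charpoly_unitary_conj_diagonal {U : Matrix ι ι ℂ} (hU : U ∈ unitaryGroup ι ℂ)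
    (d : ι → ℂ) : (U * diagonal d * star U).charpoly.roots = Finset.univ.val.map d := by
  rw [charpoly_mul_comm, ← mul_assoc, mem_unitaryGroup_iff'.mp hU, one_mul, charpoly_diagonal]
  simpa [Multiset.map_map, Function.comp_def] using
    roots_multiset_prod_X_sub_C (Finset.univ.val.map d)

theorem isUnitarilyDiagonalizable_of_conjTranspose_eq_neg {A : Matrix ι ι ℂ} (hA : Aᴴ = -A) :
    IsUnitarilyDiagonalizable A := by
  have hIA : (Complex.I • A).IsHermitian := by
    rw [IsHermitian, conjTranspose_smul, hA, smul_neg, Complex.star_def, Complex.conj_I, neg_smul,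
      neg_neg]
  refine ⟨hIA.eigenvectorUnitary, hIA.eigenvectorUnitary.2,
    -Complex.I • (RCLike.ofReal ∘ hIA.eigenvalues), ?_⟩
  rw [diagonal_smul, Matrix.mul_smul, Matrix.smul_mul, ← Unitary.conjStarAlgAut_apply (S := ℂ),
    ← hIA.spectral_theorem, smul_smul]
  simp

theorem unitary_conj_diagonal_mul_self {U : Matrix ι ι ℂ} (hU : U ∈ unitaryGroup ι ℂ)
    (d : ι → ℂ) :
    U * diagonal d * star U * (U * diagonal d * star U) =
      U * diagonal (fun i => d i ^ 2) * star U := by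
  simp only [sq, ← diagonal_mul_diagonal, Matrix.mul_assoc, ← Matrix.mul_assoc (star U) U,
    mem_unitaryGroup_iff'.mp hU, Matrix.one_mul]

theorem kronecker_mem_unitaryGroup {U : Matrix ι ι ℂ} {V : Matrix κ κ ℂ}
    (hU : U ∈ unitaryGroup ι ℂ) (hV : V ∈ unitaryGroup κ ℂ) :
    U ⊗ₖ V ∈ unitaryGroup (ι × κ) ℂ := by
  rw [mem_unitaryGroup_iff, star_eq_conjTranspose, conjTranspose_kronecker, ← mul_kronecker_mul,
    ← star_eq_conjTranspose, ← star_eq_conjTranspose, mem_unitaryGroup_iff.mp hU,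
    mem_unitaryGroup_iff.mp hV, one_kronecker_one]

namespace IsUnitarilyDiagonalizable

variable {A : Matrix ι ι ℂ}

theorem mul_self (hA : IsUnitarilyDiagonalizable A) : IsUnitarilyDiagonalizable (A * A) := by
  obtain ⟨U, hU, d, rfl⟩ := hA
  exact ⟨U, hU, _, unitary_conj_diagonal_mul_self hU d⟩

theorem roots_charpoly_mul_self (hA : IsUnitarilyDiagonalizable A) :
    (A * A).charpoly.roots = A.charpoly.roots.map (· ^ 2) := by
  obtain ⟨U, hU, d, rfl⟩ := hA
  rw [unitary_conj_diagonal_mul_self hU, roots_charpoly_unitary_conj_diagonal hU,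
    roots_charpoly_unitary_conj_diagonal hU, Multiset.map_map]
  rfl

theorem roots_charpoly_neg (hA : IsUnitarilyDiagonalizable A) :
    (-A).charpoly.roots = A.charpoly.roots.map Neg.neg := by
  obtain ⟨U, hU, d, rfl⟩ := hA
  rw [← Matrix.neg_mul, ← Matrix.mul_neg, diagonal_neg, roots_charpoly_unitary_conj_diagonal hU,
    roots_charpoly_unitary_conj_diagonal hU, Multiset.map_map]
  rfl

theorem roots_charpoly_kronecker_one_add_one_kronecker (hA : IsUnitarilyDiagonalizable A)
    {B : Matrix κ κ ℂ} (hB : IsUnitarilyDiagonalizable B) :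
    (A ⊗ₖ 1 + 1 ⊗ₖ B).charpoly.roots =
      A.charpoly.roots.bind fun a => B.charpoly.roots.map (a + ·) := by
  obtain ⟨U, hU, a, rfl⟩ := hA
  obtain ⟨V, hV, b, rfl⟩ := hB
  have hsum : (U * diagonal a * star U) ⊗ₖ 1 + 1 ⊗ₖ (V * diagonal b * star V) =
      U ⊗ₖ V * diagonal (fun p : ι × κ => a p.1 + b p.2) * star (U ⊗ₖ V) := by
    have hUU : U * 1 * star U = 1 := by rw [Matrix.mul_one, mem_unitaryGroup_iff.mp hU]
    have hVV : V * 1 * star V = 1 := by rw [Matrix.mul_one, mem_unitaryGroup_iff.mp hV]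
    have hdiag : diagonal a ⊗ₖ (1 : Matrix κ κ ℂ) + (1 : Matrix ι ι ℂ) ⊗ₖ diagonal b =
        diagonal (fun p : ι × κ => a p.1 + b p.2) := by
      rw [← diagonal_one, diagonal_kronecker_diagonal, ← diagonal_one, diagonal_kronecker_diagonal,
        diagonal_add]
      simp
    rw [← hUU, ← hVV, ← kronecker_unitary_conj, ← kronecker_unitary_conj, ← add_mul, ← mul_add,
      hdiag]
  rw [hsum, roots_charpoly_unitary_conj_diagonal (kronecker_mem_unitaryGroup hU hV),
    roots_charpoly_unitary_conj_diagonal hU, roots_charpoly_unitary_conj_diagonal hV]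
  simp only [← Multiset.bind_singleton, Multiset.univ_val_bind_prod, Multiset.bind_map,
    Multiset.bind_assoc, Multiset.singleton_bind]

end IsUnitarilyDiagonalizable

theorem isUnitarilyDiagonalizable_map_ofReal {X : Matrix ι ι ℝ} (hX : Xᵀ = -X) :
    (X.map Complex.ofReal).IsUnitarilyDiagonalizable :=
  isUnitarilyDiagonalizable_of_conjTranspose_eq_neg <| by
    rw [conjTranspose_map_ofReal, hX]
    exact Matrix.map_neg _ Complex.ofReal_neg _

end UnitaryDiagonalization

end Matrix

theorem modifiedCartesianProduct_spectrum_general {m n t r : ℕ}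
    (SH : Matrix (Fin m) (Fin m) ℝ) (SG : Matrix (Fin n) (Fin n) ℝ)
    (D : Matrix (Fin m) (Fin m) ℝ)
    (hSH : SHᵀ = -SH) (hSG : SGᵀ = -SG)
    (hDdiag : ∀ i j, i ≠ j → D i j = 0)
    (hDpm : ∀ i, D i i = 1 ∨ D i i = -1)
    (hanti : D * SH = -(SH * D))
    (μ : Fin t → ℝ) (ν : Fin r → ℝ)
    (hHspec : (SH.map Complex.ofReal).charpoly.roots =
      Multiset.replicate (m - 2 * t) 0 +
        (Finset.univ : Finset (Fin t)).val.bind (fun j =>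
          {(μ j : ℂ) * Complex.I, -((μ j : ℂ) * Complex.I)}))
    (hGspec : (SG.map Complex.ofReal).charpoly.roots =
      Multiset.replicate (n - 2 * r) 0 +
        (Finset.univ : Finset (Fin r)).val.bind (fun k =>
          {(ν k : ℂ) * Complex.I, -((ν k : ℂ) * Complex.I)})) :
    ((SH ⊗ₖ (1 : Matrix (Fin n) (Fin n) ℝ) + D ⊗ₖ SG).map Complex.ofReal).charpoly.roots =
      Multiset.replicate ((m - 2 * t) * (n - 2 * r)) 0 +
        (Finset.univ : Finset (Fin t × Fin r)).val.bind (fun p =>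
          Multiset.replicate 2
              ((Real.sqrt ((μ p.1) ^ 2 + (ν p.2) ^ 2) : ℂ) * Complex.I) +
            Multiset.replicate 2
              (-((Real.sqrt ((μ p.1) ^ 2 + (ν p.2) ^ 2) : ℂ) * Complex.I))) +
        (Finset.univ : Finset (Fin t)).val.bind (fun j =>
          Multiset.replicate (n - 2 * r) ((μ j : ℂ) * Complex.I) +
            Multiset.replicate (n - 2 * r) (-((μ j : ℂ) * Complex.I))) +
        (Finset.univ : Finset (Fin r)).val.bind (fun k =>
          Multiset.replicate (m - 2 * t) ((ν k : ℂ) * Complex.I) +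
            Multiset.replicate (m - 2 * t) (-((ν k : ℂ) * Complex.I))) := by
  set M := SH ⊗ₖ (1 : Matrix (Fin n) (Fin n) ℝ) + D ⊗ₖ SG
  have hD : D.IsDiag := fun i j => hDdiag i j
  have hMt : Mᵀ = -M := transpose_kronecker_one_add_kronecker hSH hSG hD.isSymm
  have hsq : M.map Complex.ofReal * M.map Complex.ofReal =
      (SH.map Complex.ofReal * SH.map Complex.ofReal) ⊗ₖ 1 +
        1 ⊗ₖ (SG.map Complex.ofReal * SG.map Complex.ofReal) := by
    rw [← map_ofReal_mul,
      kronecker_one_add_kronecker_mul_self (hD.mul_self_eq_one hDpm) hanti]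
    simp only [Matrix.map_add _ Complex.ofReal_add, map_ofReal_kronecker, map_ofReal_mul,
      Matrix.map_one _ Complex.ofReal_zero Complex.ofReal_one]
  have hM := isUnitarilyDiagonalizable_map_ofReal hMt
  have hSH' := isUnitarilyDiagonalizable_map_ofReal hSH
  have hSG' := isUnitarilyDiagonalizable_map_ofReal hSG
  apply Multiset.eq_of_map_sq_eq_of_map_neg_eq
  · rw [← hM.roots_charpoly_neg, ← Matrix.map_neg _ Complex.ofReal_neg, ← hMt, transpose_map,
      charpoly_transpose]
  · exact productSkewSpectrum_map_neg _ _ _ _ _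
  · rw [← hM.roots_charpoly_mul_self, hsq,
      hSH'.mul_self.roots_charpoly_kronecker_one_add_one_kronecker hSG'.mul_self,
      hSH'.roots_charpoly_mul_self, hSG'.roots_charpoly_mul_self, hHspec, hGspec]
    refine (productSkewSpectrum_map_sq _ _ fun p => ?_).symm
    rw [mul_pow, mul_pow, mul_pow, ← Complex.ofReal_pow,
      Real.sq_sqrt (add_nonneg (sq_nonneg _) (sq_nonneg _))]
    push_cast
    ring

/-- Skew-spectrum of the modified Cartesian product `(H^τ □ G^σ)^o` with a bipartite
factor `H`.  At the matrix level the skew-adjacency matrix of the product is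
`SH ⊗ I_n + D ⊗ SG`, where `D` is the diagonal `±1` matrix encoding the bipartition of
`H` (so that `D SH = -SH D`).  If the skew-eigenvalues of `SH` are `±μ_j i` (`1 ≤ j ≤ t`)
together with `m - 2t` zeros, and those of `SG` are `±ν_k i` (`1 ≤ k ≤ r`) together with
`n - 2r` zeros, then the skew-eigenvalues of the product are `±i√(μ_j² + ν_k²)` each with
multiplicity `2`, `±μ_j i` with multiplicity `n - 2r`, `±ν_k i` with multiplicity
`m - 2t`, and `0` with multiplicity `(m - 2t)(n - 2r)`. -/
theorem modifiedCartesianProduct_spectrum {m n t r : ℕ} (ht : 2 * t ≤ m) (hr : 2 * r ≤ n)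
    (SH : Matrix (Fin m) (Fin m) ℝ) (SG : Matrix (Fin n) (Fin n) ℝ)
    (D : Matrix (Fin m) (Fin m) ℝ)
    (hSH : SHᵀ = -SH) (hSG : SGᵀ = -SG)
    (hDdiag : ∀ i j, i ≠ j → D i j = 0)
    (hDpm : ∀ i, D i i = 1 ∨ D i i = -1)
    (hanti : D * SH = -(SH * D))
    (μ : Fin t → ℝ) (ν : Fin r → ℝ)
    (hμpos : ∀ j, 0 < μ j) (hνpos : ∀ k, 0 < ν k)
    (hHspec : (SH.map Complex.ofReal).charpoly.roots =
      Multiset.replicate (m - 2 * t) 0 +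
        (Finset.univ : Finset (Fin t)).val.bind (fun j =>
          {(μ j : ℂ) * Complex.I, -((μ j : ℂ) * Complex.I)}))
    (hGspec : (SG.map Complex.ofReal).charpoly.roots =
      Multiset.replicate (n - 2 * r) 0 +
        (Finset.univ : Finset (Fin r)).val.bind (fun k =>
          {(ν k : ℂ) * Complex.I, -((ν k : ℂ) * Complex.I)})) :
    ((SH ⊗ₖ (1 : Matrix (Fin n) (Fin n) ℝ) + D ⊗ₖ SG).map Complex.ofReal).charpoly.roots =
      Multiset.replicate ((m - 2 * t) * (n - 2 * r)) 0 +
        (Finset.univ : Finset (Fin t × Fin r)).val.bind (fun p =>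
          Multiset.replicate 2
              ((Real.sqrt ((μ p.1) ^ 2 + (ν p.2) ^ 2) : ℂ) * Complex.I) +
            Multiset.replicate 2
              (-((Real.sqrt ((μ p.1) ^ 2 + (ν p.2) ^ 2) : ℂ) * Complex.I))) +
        (Finset.univ : Finset (Fin t)).val.bind (fun j =>
          Multiset.replicate (n - 2 * r) ((μ j : ℂ) * Complex.I) +
            Multiset.replicate (n - 2 * r) (-((μ j : ℂ) * Complex.I))) +
        (Finset.univ : Finset (Fin r)).val.bind (fun k =>
          Multiset.replicate (m - 2 * t) ((ν k : ℂ) * Complex.I) +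
            Multiset.replicate (m - 2 * t) (-((ν k : ℂ) * Complex.I))) :=
  modifiedCartesianProduct_spectrum_general SH SG D hSH hSG hDdiag hDpm hanti μ ν hHspec hGspec
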